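/- For real numbers β ≥ γ ≥ 0 with β + γ > 1, 0 < γ, and real numbers k₁, k₂, the integral over τ ∈ ℝ of 1/(⟨τ - k₁⟩^β ⟨τ - k₂⟩^γ) dτ is bounded by a constant (depending only on β, γ) times ⟨k₁ - k₂⟩^{-γ} φ_β(k₁ - k₂), where φ_β(k) = 1 if β > 1, φ_β(k) = log(1 + ⟨k⟩) if β = 1, and φ_β(k) = ⟨k⟩^{1-β} if β < 1. -/

import Mathlib

/-!
Put `M = ⟨k₁ - k₂⟩` and let `x, z` be the shifts `τ - k₁, τ - k₂`, so `z - x = k₁ - k₂`.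
If `|x| ≤ |z|` then `|k₁ - k₂| ≤ 2|z|`, so the bracket at `z` is `≳ M`, and it is also `≥ ⟨x⟩`;
hence the integrand is at most `M^{-γ} ⟨x⟩^{-β}` when `|x| ≤ M` and `⟨x⟩^{-(β+γ)}` otherwise.
When instead the `γ`-bracket is the smaller one, `γ ≤ β` lets the exponents be swapped at the
cost of a constant. Integrating this majorant, the part `|x| ≤ M` gives
`M^{-γ} ∫₁^{1+M} u^{-β} du` (using `⟨t⟩ ≥ (1 + t)/2`), and the tail gives `M^{1-β-γ}`, which
the same expression dominates. Finally `∫₁^{1+M} u^{-β} du` is, up to a constant, `φ_β`.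
-/

open Real MeasureTheory

/-- Japanese bracket. -/
noncomputable def jb (x : ℝ) : ℝ := Real.sqrt (1 + x ^ 2)

/-- The function `φ_β`. -/
noncomputable def phi (β : ℝ) (k : ℝ) : ℝ :=
  if 1 < β then 1 else if β = 1 then Real.log (1 + jb k) else jb k ^ (1 - β)

open Set

lemma jb_pos (x : ℝ) : 0 < jb x := Real.sqrt_pos.2 (by positivity)

lemma one_le_jb (x : ℝ) : 1 ≤ jb x := Real.one_le_sqrt.2 (by nlinarith)

lemma abs_le_jb (x : ℝ) : |x| ≤ jb x :=
  Real.abs_le_sqrt (by linarith)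

lemma jb_abs (x : ℝ) : jb |x| = jb x := by simp [jb]

lemma jb_sub_comm (x y : ℝ) : jb (x - y) = jb (y - x) := by simp only [jb]; ring_nf

lemma continuous_jb : Continuous jb := by unfold jb; fun_prop

lemma jb_le_jb {x y : ℝ} (h : |x| ≤ |y|) : jb x ≤ jb y :=
  Real.sqrt_le_sqrt (by nlinarith [sq_abs x, sq_abs y, abs_nonneg x])

lemma jb_le_two_mul_jb {x y : ℝ} (h : |x| ≤ 2 * |y|) : jb x ≤ 2 * jb y := by
  rw [jb, Real.sqrt_le_left (by linarith [jb_pos y]), mul_pow, jb, Real.sq_sqrt (by positivity)]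
  nlinarith [sq_abs x, sq_abs y, abs_nonneg x]

lemma jb_le_two_mul {x M : ℝ} (hM : 1 ≤ M) (h : |x| ≤ M) : jb x ≤ 2 * M := by
  rw [jb, Real.sqrt_le_left (by linarith)]
  nlinarith [sq_abs x, abs_nonneg x]

lemma one_add_le_two_mul_jb {t : ℝ} (ht : 0 ≤ t) : 1 + t ≤ 2 * jb t := by
  linarith [one_le_jb t, abs_le_jb t, abs_of_nonneg ht]

lemma continuous_jb_rpow (p : ℝ) : Continuous fun x => jb x ^ p :=
  continuous_jb.rpow_const fun x => Or.inl (jb_pos x).ne'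

lemma integrable_jb_rpow_neg {p : ℝ} (hp : 1 < p) : Integrable fun x => jb x ^ (-p) := by
  refine (integrable_rpow_neg_one_add_norm_sq (E := ℝ) (μ := volume) (r := p)
    (by simpa using hp)).congr (.of_forall fun x => ?_)
  simp only [jb, Real.sqrt_eq_rpow, ← Real.rpow_mul (by positivity : (0:ℝ) ≤ 1 + x ^ 2),
    Real.norm_eq_abs, sq_abs]
  ring_nf

lemma rpow_neg_le_two_rpow_mul {a b q : ℝ} (ha : 0 < a) (h : a ≤ 2 * b) (hq : 0 ≤ q) :
    b ^ (-q) ≤ 2 ^ q * a ^ (-q) := by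
  calc b ^ (-q) ≤ (a / 2) ^ (-q) := Real.rpow_le_rpow_of_nonpos (by positivity) (by linarith)
        (by linarith)
    _ = 2 ^ q * a ^ (-q) := by
      rw [Real.div_rpow ha.le zero_le_two, Real.rpow_neg zero_le_two, div_inv_eq_mul, mul_comm]

lemma jb_rpow_neg_mul_le_of_abs_le {x z p q : ℝ} (hxz : |x| ≤ |z|) (hq : 0 ≤ q) :
    jb x ^ (-p) * jb z ^ (-q) ≤ jb x ^ (-(p + q)) := by
  rw [neg_add, Real.rpow_add (jb_pos x)]
  exact mul_le_mul_of_nonneg_left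
    (Real.rpow_le_rpow_of_nonpos (jb_pos x) (jb_le_jb hxz) (by linarith))
    (Real.rpow_nonneg (jb_pos x).le _)

lemma jb_rpow_neg_le_two_rpow_mul_jb_sub {x z q : ℝ} (hxz : |x| ≤ |z|) (hq : 0 ≤ q) :
    jb z ^ (-q) ≤ 2 ^ q * jb (z - x) ^ (-q) :=
  rpow_neg_le_two_rpow_mul (jb_pos _)
    (jb_le_two_mul_jb (by linarith [abs_sub z x])) hq

lemma rpow_neg_mul_jb_rpow_neg_le {x M β γ : ℝ} (hM : 1 ≤ M) (hx : |x| ≤ M) (hγ : 0 ≤ γ)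
    (hγβ : γ ≤ β) :
    M ^ (-β) * jb x ^ (-γ) ≤ 2 ^ β * (M ^ (-γ) * jb x ^ (-β)) := by
  have hM0 : 0 < M := by linarith
  have hx2 : jb x ^ (β - γ) ≤ 2 ^ β * M ^ (β - γ) := by
    calc jb x ^ (β - γ) ≤ (2 * M) ^ (β - γ) :=
          Real.rpow_le_rpow (jb_pos x).le (jb_le_two_mul hM hx) (by linarith)
      _ = 2 ^ (β - γ) * M ^ (β - γ) := Real.mul_rpow zero_le_two hM0.le
      _ ≤ 2 ^ β * M ^ (β - γ) := by
        gcongr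
        · norm_num
        · linarith
  have := jb_pos x
  calc M ^ (-β) * jb x ^ (-γ) = M ^ (-β) * jb x ^ (-β) * jb x ^ (β - γ) := by
        rw [mul_assoc, ← Real.rpow_add (jb_pos x)]; ring_nf
    _ ≤ M ^ (-β) * jb x ^ (-β) * (2 ^ β * M ^ (β - γ)) := by gcongr
    _ = 2 ^ β * (M ^ (-γ) * jb x ^ (-β)) := by
        rw [show -γ = -β + (β - γ) by ring, Real.rpow_add hM0]; ring

noncomputable def bracketMajorant (β γ M t : ℝ) : ℝ :=
  if t ≤ M then M ^ (-γ) * jb t ^ (-β) else jb t ^ (-(β + γ))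

lemma bracketMajorant_nonneg {β γ M : ℝ} (hM : 0 ≤ M) (t : ℝ) :
    0 ≤ bracketMajorant β γ M t := by
  have := jb_pos t
  unfold bracketMajorant
  split_ifs <;> positivity

lemma jb_rpow_neg_mul_le_bracketMajorant {β γ : ℝ} (hγ : 0 ≤ γ) (hγβ : γ ≤ β) (x z : ℝ) :
    jb x ^ (-β) * jb z ^ (-γ) ≤ 4 ^ β *
      (bracketMajorant β γ (jb (z - x)) |x| + bracketMajorant β γ (jb (z - x)) |z|) := by
  set M := jb (z - x) with hMdef
  have hM : 1 ≤ M := one_le_jb _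
  have hβ : 0 ≤ β := hγ.trans hγβ
  have h4 : (4 : ℝ) ^ β = 2 ^ β * 2 ^ β := by
    rw [← Real.mul_rpow zero_le_two zero_le_two]; norm_num
  have h2β : 1 ≤ (2 : ℝ) ^ β := Real.one_le_rpow one_le_two hβ
  have h1 : 1 ≤ (4 : ℝ) ^ β := by nlinarith
  have hM0 : 0 < M := by linarith
  have hmx := bracketMajorant_nonneg (β := β) (γ := γ) hM0.le |x|
  have hmz := bracketMajorant_nonneg (β := β) (γ := γ) hM0.le |z|
  have := jb_pos x
  have := jb_pos z
  rcases le_total |x| |z| with h | h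
  · suffices jb x ^ (-β) * jb z ^ (-γ) ≤ 4 ^ β * bracketMajorant β γ M |x| by nlinarith
    unfold bracketMajorant
    rw [jb_abs]
    split_ifs
    · have h2γ : (2 : ℝ) ^ γ ≤ 4 ^ β := by
        rw [h4]; nlinarith [Real.rpow_le_rpow_of_exponent_le one_le_two hγβ]
      calc jb x ^ (-β) * jb z ^ (-γ) ≤ jb x ^ (-β) * (2 ^ γ * M ^ (-γ)) := by
            gcongr; exact jb_rpow_neg_le_two_rpow_mul_jb_sub h hγ
        _ ≤ 4 ^ β * (M ^ (-γ) * jb x ^ (-β)) := by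
            rw [mul_comm, mul_assoc]; gcongr
    · calc jb x ^ (-β) * jb z ^ (-γ) ≤ jb x ^ (-(β + γ)) := jb_rpow_neg_mul_le_of_abs_le h hγ
        _ ≤ 4 ^ β * jb x ^ (-(β + γ)) := le_mul_of_one_le_left (by positivity) h1
  · suffices jb x ^ (-β) * jb z ^ (-γ) ≤ 4 ^ β * bracketMajorant β γ M |z| by nlinarith
    unfold bracketMajorant
    rw [jb_abs, mul_comm (jb x ^ (-β))]
    split_ifs with hzM
    · calc jb z ^ (-γ) * jb x ^ (-β) ≤ jb z ^ (-γ) * (2 ^ β * M ^ (-β)) := by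
            gcongr; rw [hMdef, jb_sub_comm]; exact jb_rpow_neg_le_two_rpow_mul_jb_sub h hβ
        _ = 2 ^ β * (M ^ (-β) * jb z ^ (-γ)) := by ring
        _ ≤ 2 ^ β * (2 ^ β * (M ^ (-γ) * jb z ^ (-β))) :=
            mul_le_mul_of_nonneg_left (rpow_neg_mul_jb_rpow_neg_le hM hzM hγ hγβ)
              (by positivity)
        _ = 4 ^ β * (M ^ (-γ) * jb z ^ (-β)) := by rw [h4]; ring
    · calc jb z ^ (-γ) * jb x ^ (-β) ≤ jb z ^ (-(γ + β)) := jb_rpow_neg_mul_le_of_abs_le h hβ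
        _ ≤ 4 ^ β * jb z ^ (-(β + γ)) := by
            rw [add_comm]; exact le_mul_of_one_le_left (by positivity) h1

lemma bracketMajorant_le {β γ M t : ℝ} (hM : 1 ≤ M) (hγ : 0 ≤ γ) (ht : 0 ≤ t) :
    bracketMajorant β γ M t ≤ 2 ^ γ * jb t ^ (-(β + γ)) := by
  have := jb_pos t
  unfold bracketMajorant
  split_ifs with htM
  · calc M ^ (-γ) * jb t ^ (-β) ≤ 2 ^ γ * jb t ^ (-γ) * jb t ^ (-β) := by
          gcongr
          exact rpow_neg_le_two_rpow_mul this (jb_le_two_mul hM (by rwa [abs_of_nonneg ht])) hγ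
      _ = 2 ^ γ * jb t ^ (-(β + γ)) := by
          rw [mul_assoc, ← Real.rpow_add this]; ring_nf
  · exact le_mul_of_one_le_left (by positivity) (Real.one_le_rpow one_le_two hγ)

lemma measurable_bracketMajorant (β γ M : ℝ) : Measurable (bracketMajorant β γ M) :=
  Measurable.ite measurableSet_Iic
    (measurable_const.mul (continuous_jb_rpow _).measurable) (continuous_jb_rpow _).measurable

lemma integrable_bracketMajorant_abs {β γ M : ℝ} (hM : 1 ≤ M) (hγ : 0 ≤ γ) (hp : 1 < β + γ) :
    Integrable fun x => bracketMajorant β γ M |x| := by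
  refine ((integrable_jb_rpow_neg hp).const_mul (2 ^ γ)).mono'
    ((measurable_bracketMajorant β γ M).comp measurable_abs).aestronglyMeasurable
    (.of_forall fun x => ?_)
  rw [Real.norm_of_nonneg (bracketMajorant_nonneg (by linarith) _), ← jb_abs x]
  exact bracketMajorant_le hM hγ (abs_nonneg x)

lemma integrableOn_bracketMajorant {β γ M : ℝ} (hM : 1 ≤ M) (hγ : 0 ≤ γ) (hp : 1 < β + γ) :
    IntegrableOn (bracketMajorant β γ M) (Ioi 0) :=
  ((integrable_jb_rpow_neg hp).const_mul (2 ^ γ)).integrableOn.mono'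
    (measurable_bracketMajorant β γ M).aestronglyMeasurable
    (ae_restrict_of_forall_mem measurableSet_Ioi fun t ht => by
      rw [Real.norm_of_nonneg (bracketMajorant_nonneg (by linarith) _)]
      exact bracketMajorant_le hM hγ (le_of_lt ht))

lemma intervalIntegral_jb_rpow_neg_le {β M : ℝ} (hβ : 0 ≤ β) (hM : 0 ≤ M) :
    ∫ t in 0..M, jb t ^ (-β) ≤ 2 ^ β * ∫ u in 1..1 + M, u ^ (-β) := by
  have hcont : ContinuousOn (fun t : ℝ => (1 + t) ^ (-β)) (uIcc 0 M) := by
    refine ContinuousOn.rpow_const (by fun_prop) fun t ht => Or.inl ?_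
    rw [uIcc_of_le hM] at ht
    linarith [ht.1]
  calc ∫ t in 0..M, jb t ^ (-β) ≤ ∫ t in 0..M, 2 ^ β * (1 + t) ^ (-β) := by
        refine intervalIntegral.integral_mono_on hM
          ((continuous_jb_rpow _).intervalIntegrable _ _)
          (hcont.intervalIntegrable.const_mul _) fun t ht => ?_
        exact rpow_neg_le_two_rpow_mul (by linarith [ht.1]) (one_add_le_two_mul_jb ht.1) hβ
    _ = 2 ^ β * ∫ u in 1..1 + M, u ^ (-β) := by
        rw [intervalIntegral.integral_const_mul,
          intervalIntegral.integral_comp_add_left (fun u => u ^ (-β)), add_zero]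

lemma setIntegral_Ioi_jb_rpow_neg_le {p M : ℝ} (hp : 1 < p) (hM : 0 < M) :
    ∫ t in Ioi M, jb t ^ (-p) ≤ M ^ (1 - p) / (p - 1) := by
  calc ∫ t in Ioi M, jb t ^ (-p) ≤ ∫ t in Ioi M, t ^ (-p) := by
        refine setIntegral_mono_on (integrable_jb_rpow_neg hp).integrableOn
          (integrableOn_Ioi_rpow_of_lt (by linarith) hM) measurableSet_Ioi fun t ht => ?_
        exact Real.rpow_le_rpow_of_nonpos (hM.trans ht) ((le_abs_self t).trans (abs_le_jb t))
          (by linarith)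
    _ = M ^ (1 - p) / (p - 1) := by
        rw [integral_Ioi_rpow_of_lt (by linarith) hM, show -p + 1 = 1 - p by ring, neg_div,
          ← div_neg, neg_sub]

lemma rpow_one_sub_le_intervalIntegral {β M : ℝ} (hβ : 0 ≤ β) (hM : 1 ≤ M) :
    M ^ (1 - β) ≤ 2 ^ β * ∫ u in 1..1 + M, u ^ (-β) := by
  have hM0 : 0 < M := by linarith
  have hcont : ContinuousOn (fun u : ℝ => u ^ (-β)) (uIcc 1 (1 + M)) := by
    refine ContinuousOn.rpow_const continuousOn_id fun u hu => Or.inl ?_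
    rw [uIcc_of_le (by linarith)] at hu
    exact (zero_lt_one.trans_le hu.1).ne'
  calc M ^ (1 - β) = M * M ^ (-β) := by
        rw [sub_eq_add_neg, Real.rpow_add hM0, Real.rpow_one]
    _ ≤ M * (2 ^ β * (1 + M) ^ (-β)) := by
        gcongr; exact rpow_neg_le_two_rpow_mul (by linarith) (by linarith) hβ
    _ = 2 ^ β * ∫ _ in 1..1 + M, (1 + M) ^ (-β) := by
        rw [intervalIntegral.integral_const, smul_eq_mul]; ring
    _ ≤ 2 ^ β * ∫ u in 1..1 + M, u ^ (-β) := by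
        gcongr
        refine intervalIntegral.integral_mono_on (by linarith) intervalIntegrable_const
          hcont.intervalIntegrable fun u hu => ?_
        exact Real.rpow_le_rpow_of_nonpos (by linarith [hu.1]) hu.2 (by linarith)

lemma setIntegral_Ioi_bracketMajorant_le {β γ M : ℝ} (hM : 1 ≤ M) (hβ : 0 ≤ β) (hγ : 0 ≤ γ)
    (hp : 1 < β + γ) :
    ∫ t in Ioi 0, bracketMajorant β γ M t
      ≤ 2 ^ β * (1 + 1 / (β + γ - 1)) * M ^ (-γ) * ∫ u in 1..1 + M, u ^ (-β) := by
  have hM0 : 0 < M := by linarith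
  have hint := integrableOn_bracketMajorant (β := β) hM hγ hp
  have hnear :
      ∫ t in Ioc 0 M, bracketMajorant β γ M t = M ^ (-γ) * ∫ t in 0..M, jb t ^ (-β) := by
    rw [intervalIntegral.integral_of_le hM0.le, ← integral_const_mul]
    exact setIntegral_congr_fun measurableSet_Ioc fun t ht => if_pos ht.2
  have hfar : ∫ t in Ioi M, bracketMajorant β γ M t = ∫ t in Ioi M, jb t ^ (-(β + γ)) :=
    setIntegral_congr_fun measurableSet_Ioi fun t ht => if_neg (not_le.2 ht)
  have hΦ := rpow_one_sub_le_intervalIntegral hβ hM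
  have hp' : 0 < 1 / (β + γ - 1) := by
    have : 0 < β + γ - 1 := by linarith
    positivity
  set Φ := ∫ u in 1..1 + M, u ^ (-β)
  calc ∫ t in Ioi 0, bracketMajorant β γ M t
      = M ^ (-γ) * (∫ t in 0..M, jb t ^ (-β)) + ∫ t in Ioi M, jb t ^ (-(β + γ)) := by
        rw [← Ioc_union_Ioi_eq_Ioi hM0.le, setIntegral_union (Ioc_disjoint_Ioi le_rfl)
          measurableSet_Ioi (hint.mono_set Ioc_subset_Ioi_self)
          (hint.mono_set (Ioi_subset_Ioi hM0.le)), hnear, hfar]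
    _ ≤ M ^ (-γ) * (2 ^ β * Φ) + M ^ (1 - (β + γ)) / (β + γ - 1) := by
        gcongr
        · exact intervalIntegral_jb_rpow_neg_le hβ hM0.le
        · exact setIntegral_Ioi_jb_rpow_neg_le hp hM0
    _ = M ^ (-γ) * (2 ^ β * Φ) + 1 / (β + γ - 1) * (M ^ (-γ) * M ^ (1 - β)) := by
        rw [← Real.rpow_add hM0]; ring_nf
    _ ≤ M ^ (-γ) * (2 ^ β * Φ) + 1 / (β + γ - 1) * (M ^ (-γ) * (2 ^ β * Φ)) := by
        have : 0 < M ^ (-γ) := by positivity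
        gcongr
    _ = 2 ^ β * (1 + 1 / (β + γ - 1)) * M ^ (-γ) * Φ := by ring

lemma exists_integral_jb_rpow_neg_mul_le {β γ : ℝ} (hγ : 0 ≤ γ) (hγβ : γ ≤ β)
    (hp : 1 < β + γ) :
    ∃ C > 0, ∀ k₁ k₂ : ℝ, ∫ τ, jb (τ - k₁) ^ (-β) * jb (τ - k₂) ^ (-γ)
      ≤ C * jb (k₁ - k₂) ^ (-γ) * ∫ u in 1..1 + jb (k₁ - k₂), u ^ (-β) := by
  have hp' : 0 < 1 / (β + γ - 1) := one_div_pos.2 (by linarith)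
  refine ⟨4 ^ β * 4 * (2 ^ β * (1 + 1 / (β + γ - 1))), by positivity, fun k₁ k₂ => ?_⟩
  set M := jb (k₁ - k₂)
  have hM : 1 ≤ M := one_le_jb _
  have hmaj := integrable_bracketMajorant_abs (β := β) hM hγ hp
  calc ∫ τ, jb (τ - k₁) ^ (-β) * jb (τ - k₂) ^ (-γ)
      ≤ ∫ τ, 4 ^ β * (bracketMajorant β γ M |τ - k₁| + bracketMajorant β γ M |τ - k₂|) := by
        refine integral_mono_of_nonneg (.of_forall fun τ => ?_)
          (((hmaj.comp_sub_right k₁).add (hmaj.comp_sub_right k₂)).const_mul _)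
          (.of_forall fun τ => ?_)
        · have := jb_pos (τ - k₁)
          have := jb_pos (τ - k₂)
          positivity
        · have := jb_rpow_neg_mul_le_bracketMajorant hγ hγβ (τ - k₁) (τ - k₂)
          rwa [sub_sub_sub_cancel_left] at this
    _ = 4 ^ β * (2 * ∫ x, bracketMajorant β γ M |x|) := by
        rw [integral_const_mul, integral_add (hmaj.comp_sub_right k₁) (hmaj.comp_sub_right k₂),
          integral_sub_right_eq_self (fun x => bracketMajorant β γ M |x|),
          integral_sub_right_eq_self (fun x => bracketMajorant β γ M |x|)]
        ring
    _ = 4 ^ β * 4 * ∫ t in Ioi 0, bracketMajorant β γ M t := by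
        rw [integral_comp_abs (f := bracketMajorant β γ M)]; ring
    _ ≤ 4 ^ β * 4 * (2 ^ β * (1 + 1 / (β + γ - 1)) * M ^ (-γ)
          * ∫ u in 1..1 + M, u ^ (-β)) := by
        gcongr
        exact setIntegral_Ioi_bracketMajorant_le hM (hγ.trans hγβ) hγ hp
    _ = _ := by ring

lemma exists_intervalIntegral_rpow_neg_le_phi (β : ℝ) :
    ∃ D > 0, ∀ k : ℝ, ∫ u in 1..1 + jb k, u ^ (-β) ≤ D * phi β k := by
  rcases lt_trichotomy 1 β with hβ | rfl | hβ
  · have hβ' : 0 < β - 1 := by linarith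
    refine ⟨1 / (β - 1), by positivity, fun k => ?_⟩
    have hk : 0 < 1 + jb k := by linarith [jb_pos k]
    have hnot0 : (0 : ℝ) ∉ uIcc 1 (1 + jb k) := by
      rw [uIcc_of_le (by linarith [jb_pos k])]
      exact fun h => absurd h.1 (by norm_num)
    rw [integral_rpow (Or.inr ⟨by linarith, hnot0⟩), phi, if_pos hβ, mul_one,
      Real.one_rpow, show -β + 1 = -(β - 1) by ring, div_neg, ← neg_div, neg_sub]
    gcongr
    linarith [Real.rpow_nonneg hk.le (-(β - 1))]
  · refine ⟨1, one_pos, fun k => ?_⟩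
    have := jb_pos k
    simp_rw [Real.rpow_neg_one]
    rw [integral_inv_of_pos one_pos (by linarith), div_one, phi, if_neg (lt_irrefl 1),
      if_pos rfl, one_mul]
  · have hβ' : 0 < 1 - β := by linarith
    refine ⟨2 ^ (1 - β) / (1 - β), by positivity, fun k => ?_⟩
    have := one_le_jb k
    rw [integral_rpow (Or.inl (by linarith)), phi, if_neg (by linarith), if_neg (by linarith),
      Real.one_rpow, show -β + 1 = 1 - β by ring]
    calc ((1 + jb k) ^ (1 - β) - 1) / (1 - β) ≤ (2 * jb k) ^ (1 - β) / (1 - β) := by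
          gcongr
          linarith [Real.rpow_le_rpow (by linarith) (by linarith : 1 + jb k ≤ 2 * jb k) hβ'.le]
      _ = 2 ^ (1 - β) / (1 - β) * jb k ^ (1 - β) := by
          rw [Real.mul_rpow zero_le_two (by linarith)]; ring

/-- continuous convolution estimate for Japanese brackets. -/
theorem stmt_1 (β γ : ℝ) (hβγ : γ ≤ β) (hγ : 0 < γ) (h : 1 < β + γ) :
    ∃ C > 0, ∀ k₁ k₂ : ℝ,
      ∫ τ : ℝ, 1 / (jb (τ - k₁) ^ β * jb (τ - k₂) ^ γ)
        ≤ C * jb (k₁ - k₂) ^ (-γ) * phi β (k₁ - k₂) := by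
  obtain ⟨C, hC, hint⟩ := exists_integral_jb_rpow_neg_mul_le hγ.le hβγ h
  obtain ⟨D, hD, hΦ⟩ := exists_intervalIntegral_rpow_neg_le_phi β
  refine ⟨C * D, mul_pos hC hD, fun k₁ k₂ => ?_⟩
  have hrpow : (fun τ => 1 / (jb (τ - k₁) ^ β * jb (τ - k₂) ^ γ))
      = fun τ => jb (τ - k₁) ^ (-β) * jb (τ - k₂) ^ (-γ) := by
    ext τ
    rw [Real.rpow_neg (jb_pos _).le, Real.rpow_neg (jb_pos _).le, one_div, mul_inv]
  have := jb_pos (k₁ - k₂)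
  calc ∫ τ, 1 / (jb (τ - k₁) ^ β * jb (τ - k₂) ^ γ)
      ≤ C * jb (k₁ - k₂) ^ (-γ) * ∫ u in 1..1 + jb (k₁ - k₂), u ^ (-β) := by
        rw [hrpow]; exact hint k₁ k₂
    _ ≤ C * jb (k₁ - k₂) ^ (-γ) * (D * phi β (k₁ - k₂)) := by gcongr; exact hΦ _
    _ = C * D * jb (k₁ - k₂) ^ (-γ) * phi β (k₁ - k₂) := by ring
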